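/- arXiv:1704.00964 — 2 statements merged into one kernel-verified Lean document; each statement's English description precedes it below -/
import Mathlib

section
/- For integers n, d, x, s for which G₁(n,d,x,s) is defined, W(G₁(n,d,x,s)) = W(B₁(n−2,d,x)) + n²/4 + 3n/2 + 2d² + 3d + 2s² − s − 2x. -/
/-!
In a caterpillar two distinct vertices over the spine positions `i` and `j` are at distance
`|i - j|`, plus one for each of them that is a leaf. Summing over ordered pairs, with
`wᵢ = L i + 1` vertices over `u_i`, `N = ∑ wᵢ` vertices and `ℓ = ∑ L i` leaves,
`2 W = ∑ᵢ ∑ⱼ wᵢ wⱼ |i - j| + 2 (N - 1) ℓ`. Hence appending a leaf to `u_t` raises `W`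
by `∑ᵢ wᵢ |i - t| + N + ℓ`. Doing this at `u_s` and then at `u_d`, and evaluating the sums over
symmetric intervals for the leaf counts of `B₁`, gives the formula.
-/

/-- The Wiener index: sum of distances over unordered pairs of vertices. -/
noncomputable def wiener {V : Type*} [Fintype V] (G : SimpleGraph V) : ℕ :=
  (∑ u : V, ∑ v : V, G.dist u v) / 2

/-- Vertex set for a caterpillar with spine `u_{-d}, …, u_d` and `L i` leaves at `u_i`.
`(0, i)` is the spine vertex `u_i`; `(j, i)` for `1 ≤ j ≤ L i` is the `j`-th leaf at `u_i`. -/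
noncomputable def catVerts (d : ℤ) (L : ℤ → ℕ) : Finset (ℤ × ℤ) :=
  (Finset.Icc (-d) d).biUnion (fun i => (Finset.Icc (0:ℤ) (L i : ℤ)).image (fun j => (j, i)))

/-- The caterpillar graph with spine `u_{-d}, …, u_d` and `L i` leaves appended to `u_i`. -/
def caterpillar (d : ℤ) (L : ℤ → ℕ) : SimpleGraph ↥(catVerts d L) :=
  SimpleGraph.fromRel (fun a b =>
    (a.1.1 = 0 ∧ b.1.1 = 0 ∧ a.1.2 + 1 = b.1.2) ∨
    (a.1.2 = b.1.2 ∧ a.1.1 = 0 ∧ b.1.1 ≠ 0))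

/-- Leaf-count function of the caterpillar `B₁(n,d,x)`. -/
def B1L (n d x : ℤ) : ℤ → ℕ := fun i =>
  (if i = -d - 1 + x ∨ i = d + 1 - x then 1 else 0) +
  (if |i| ≤ (n - 2*d - 4)/2 then 1 else 0)

/-- The caterpillar `B₁(n,d,x)`. -/
noncomputable def B1 (n d x : ℤ) := caterpillar d (B1L n d x)

/-- Leaf-count function of the caterpillar `B₂(n,d,x)`. -/
def B2L (n d x : ℤ) : ℤ → ℕ := fun i =>
  (if |i| ≤ d - 2 then 1 else 0) +
  (if |i| = d - 1 then x.toNat else 0) +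
  (if |i| = d then ((n - 4*d - 2*x + 2)/2).toNat else 0)

/-- The caterpillar `B₂(n,d,x)`. -/
noncomputable def B2 (n d x : ℤ) := caterpillar d (B2L n d x)

/-- `G₁(n,d,x,s)`: `B₁(n−2,d,x)` with an extra leaf at `u_s` and at `u_d`. -/
noncomputable def G1 (n d x s : ℤ) :=
  caterpillar d (fun i => B1L (n-2) d x i + (if i = s then 1 else 0) + (if i = d then 1 else 0))

/-- `G₂(n,d,x,s)`: `B₂(n−2,d,x)` with an extra leaf at `u_s` and at `u_d`. -/
noncomputable def G2 (n d x s : ℤ) :=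
  caterpillar d (fun i => B2L (n-2) d x i + (if i = s then 1 else 0) + (if i = d then 1 else 0))

/-- `G₃(n,d,x,s)`: `B₁(n−1,d,x)` with an extra leaf at `u_s`. -/
noncomputable def G3 (n d x s : ℤ) :=
  caterpillar d (fun i => B1L (n-1) d x i + (if i = s then 1 else 0))

/-- `G₄(n,d,x,s)`: `B₂(n−1,d,x)` with an extra leaf at `u_s`. -/
noncomputable def G4 (n d x s : ℤ) :=
  caterpillar d (fun i => B2L (n-1) d x i + (if i = s then 1 else 0))

/-- The star on `n` vertices: vertex `0` adjacent to all others. -/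
def starGraph (n : ℕ) : SimpleGraph (Fin n) :=
  SimpleGraph.fromRel (fun a _ => a.val = 0)

open Finset

namespace Int

lemma sum_Icc_neg_comp_neg {M : Type*} [AddCommMonoid M] (k : ℤ) (f : ℤ → M) :
    ∑ i ∈ Icc (-k) k, f (-i) = ∑ i ∈ Icc (-k) k, f i :=
  sum_nbij' Neg.neg Neg.neg (by intro i; simp; omega) (by intro i; simp; omega)
    (by simp) (by simp) (by simp)

lemma sum_Icc_neg_id (k : ℤ) : ∑ i ∈ Icc (-k) k, i = 0 := by
  have h := sum_Icc_neg_comp_neg k id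
  simp only [id] at h
  rw [sum_neg_distrib] at h
  omega

lemma sum_Icc_neg_add_one {M : Type*} [AddCommMonoid M] {k : ℤ} (hk : 0 ≤ k) (f : ℤ → M) :
    ∑ i ∈ Icc (-(k + 1)) (k + 1), f i
      = ∑ i ∈ Icc (-k) k, f i + (f (k + 1) + f (-(k + 1))) := by
  have : Icc (-(k + 1)) (k + 1) = insert (k + 1) (insert (-(k + 1)) (Icc (-k) k)) := by
    ext i; simp only [mem_Icc, mem_insert]; omega
  rw [this, sum_insert (by simp; omega), sum_insert (by simp)]
  abel

lemma sum_Icc_neg_abs_sub_of_le {k t : ℤ} (hk : 0 ≤ k) (hkt : k ≤ t) :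
    ∑ i ∈ Icc (-k) k, |i - t| = (2 * k + 1) * t := by
  have h : ∀ i ∈ Icc (-k) k, |i - t| = t - i := fun i hi => by
    rw [abs_of_nonpos (by simp at hi; omega)]; ring
  rw [sum_congr rfl h, sum_sub_distrib, sum_Icc_neg_id, sum_const, Int.card_Icc, nsmul_eq_mul]
  push_cast [show k + 1 - -k = 2 * k + 1 by ring, Int.toNat_of_nonneg (by omega : 0 ≤ 2 * k + 1)]
  ring

lemma sum_Icc_neg_abs_sub_of_abs_le {k t : ℤ} (ht : |t| ≤ k) :
    ∑ i ∈ Icc (-k) k, |i - t| = k ^ 2 + k + t ^ 2 := by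
  induction k, ht using Int.leInduction with
  | base =>
    rcases abs_cases t with ⟨h, ht⟩ | ⟨h, ht⟩
    · rw [h, sum_Icc_neg_abs_sub_of_le ht le_rfl]; ring
    · rw [← sum_Icc_neg_comp_neg, h]
      simp_rw [show ∀ i, |-i - t| = |i - -t| from fun i => by rw [← abs_neg]; ring_nf]
      rw [sum_Icc_neg_abs_sub_of_le (by omega) le_rfl]; ring
  | succ k hk ih =>
    have := abs_le.mp hk
    rw [sum_Icc_neg_add_one (by omega), ih, abs_of_nonneg (by omega),
      abs_of_nonpos (by omega)]
    ring

end Int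

lemma sum_sum_add_ite_mul_natAbs_sub {s : Finset ℤ} {t : ℤ} (ht : t ∈ s) (w : ℤ → ℕ) :
    ∑ i ∈ s, ∑ j ∈ s, (w i + if i = t then 1 else 0) * (w j + if j = t then 1 else 0)
        * (i - j).natAbs
      = ∑ i ∈ s, ∑ j ∈ s, w i * w j * (i - j).natAbs
        + 2 * ∑ i ∈ s, w i * (i - t).natAbs := by
  have inner : ∀ i, ∑ j ∈ s, (w j + if j = t then 1 else 0) * (i - j).natAbs
      = ∑ j ∈ s, w j * (i - j).natAbs + (i - t).natAbs := fun i => by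
    simp [add_mul, sum_add_distrib, ht]
  calc _ = ∑ i ∈ s, (w i + if i = t then 1 else 0)
          * (∑ j ∈ s, w j * (i - j).natAbs + (i - t).natAbs) := by
        simp only [mul_assoc, ← mul_sum, inner]
    _ = ∑ i ∈ s, ∑ j ∈ s, w i * w j * (i - j).natAbs + ∑ i ∈ s, w i * (i - t).natAbs
          + ∑ j ∈ s, w j * (t - j).natAbs := by
        simp only [mul_add, mul_sum, add_mul, ite_mul, one_mul, zero_mul, sum_add_distrib,
          sum_ite_irrel, sum_const_zero, sum_ite_eq', ht, ↓reduceIte, sub_self, Int.natAbs_zero,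
          add_zero, mul_assoc]
        ring
    _ = _ := by
        have hsymm : ∀ j, (t - j).natAbs = (j - t).natAbs := fun j => by
          rw [← Int.natAbs_neg, neg_sub]
        simp only [hsymm]
        ring

theorem SimpleGraph.dist_eq_dist_add_one_of_forall_adj_eq {V : Type*} {G : SimpleGraph V}
    {a b c : V} (hac : G.Adj a c) (hc : ∀ w, G.Adj a w → w = c) (hab : a ≠ b)
    (hcb : G.Reachable c b) : G.dist a b = G.dist c b + 1 := by
  apply le_antisymm
  · obtain ⟨p, hp⟩ := hcb.exists_walk_length_eq_dist
    simpa [hp, add_comm] using G.dist_le (.cons hac p)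
  · obtain ⟨p, hp⟩ := (hac.reachable.trans hcb).exists_walk_length_eq_dist
    cases p with
    | nil => exact absurd rfl hab
    | cons h q =>
      obtain rfl := hc _ h
      simpa [← hp] using G.dist_le q

namespace Caterpillar

variable {d : ℤ} {L : ℤ → ℕ}

lemma mem_catVerts {p : ℤ × ℤ} :
    p ∈ catVerts d L ↔ p.2 ∈ Icc (-d) d ∧ p.1 ∈ Icc 0 (L p.2 : ℤ) := by
  simp only [catVerts, mem_biUnion, mem_image]
  constructor
  · rintro ⟨i, hi, j, hj, rfl⟩
    exact ⟨hi, hj⟩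
  · rintro ⟨hi, hj⟩
    exact ⟨p.2, hi, p.1, hj, rfl⟩

lemma adj_iff {a b : catVerts d L} :
    (caterpillar d L).Adj a b ↔ a ≠ b ∧
      ((a.1.1 = 0 ∧ b.1.1 = 0 ∧ (a.1.2 + 1 = b.1.2 ∨ b.1.2 + 1 = a.1.2)) ∨
       (a.1.2 = b.1.2 ∧ (a.1.1 = 0 ∧ b.1.1 ≠ 0 ∨ b.1.1 = 0 ∧ a.1.1 ≠ 0))) := by
  simp only [caterpillar, SimpleGraph.fromRel_adj]
  tauto

lemma natAbs_sub_le_length {a b : catVerts d L} (p : (caterpillar d L).Walk a b) :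
    (a.1.2 - b.1.2).natAbs ≤ p.length := by
  induction p with
  | nil => simp
  | cons h _ ih =>
    have := (adj_iff.1 h).2
    simp only [SimpleGraph.Walk.length_cons]
    omega

def spineVert (i : ℤ) (hi : i ∈ Icc (-d) d) : catVerts d L :=
  ⟨(0, i), mem_catVerts.2 ⟨hi, by simp⟩⟩

lemma exists_walk_spineVert {i j : ℤ} (hi : i ∈ Icc (-d) d) (hj : j ∈ Icc (-d) d)
    (hij : i ≤ j) :
    ∃ p : (caterpillar d L).Walk (spineVert i hi) (spineVert j hj), p.length = (j - i).toNat := by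
  induction j, hij using Int.leInduction with
  | base => exact ⟨.nil, by simp⟩
  | succ j hij ih =>
    have hj' : j ∈ Icc (-d) d := by simp only [mem_Icc] at hi hj ⊢; omega
    obtain ⟨p, hp⟩ := ih hj'
    have hadj : (caterpillar d L).Adj (spineVert j hj') (spineVert (j + 1) hj) :=
      adj_iff.2 ⟨by simp [spineVert], Or.inl ⟨rfl, rfl, Or.inl rfl⟩⟩
    exact ⟨p.concat hadj, by simp only [SimpleGraph.Walk.length_concat, hp]; omega⟩

lemma dist_spineVert {i j : ℤ} (hi : i ∈ Icc (-d) d) (hj : j ∈ Icc (-d) d) :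
    (caterpillar d L).dist (spineVert i hi) (spineVert j hj) = (i - j).natAbs := by
  wlog hij : i ≤ j generalizing i j
  · rw [SimpleGraph.dist_comm, this hj hi (by omega)]
    omega
  obtain ⟨p, hp⟩ := exists_walk_spineVert (L := L) hi hj hij
  apply le_antisymm
  · have := (caterpillar d L).dist_le p
    omega
  · obtain ⟨q, hq⟩ := p.reachable.exists_walk_length_eq_dist
    exact hq ▸ natAbs_sub_le_length q

/-- The spine vertex nearest to `a`: `a` itself, or the vertex to which the leaf `a` hangs. -/
def foot (a : catVerts d L) : catVerts d L :=
  spineVert a.1.2 (mem_catVerts.1 a.2).1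

lemma foot_eq_self {a : catVerts d L} (h : a.1.1 = 0) : foot a = a := by
  ext <;> simp [foot, spineVert, h]

lemma adj_foot {a : catVerts d L} (h : a.1.1 ≠ 0) : (caterpillar d L).Adj a (foot a) :=
  adj_iff.2 ⟨fun e => h (by rw [e]; rfl), Or.inr ⟨rfl, Or.inr ⟨rfl, h⟩⟩⟩

lemma eq_foot_of_adj {a b : catVerts d L} (h : a.1.1 ≠ 0) (hab : (caterpillar d L).Adj a b) :
    b = foot a := by
  have := (adj_iff.1 hab).2
  ext <;> simp only [foot, spineVert] <;> tauto

lemma reachable_foot (a : catVerts d L) : (caterpillar d L).Reachable a (foot a) := by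
  by_cases h : a.1.1 = 0
  · rw [foot_eq_self h]
  · exact (adj_foot h).reachable

lemma reachable (a b : catVerts d L) : (caterpillar d L).Reachable a b := by
  suffices h : ∀ a b : catVerts d L, a.1.2 ≤ b.1.2 → (caterpillar d L).Reachable a b by
    rcases le_total a.1.2 b.1.2 with hab | hba
    exacts [h a b hab, (h b a hba).symm]
  intro a b hab
  obtain ⟨p, -⟩ :=
    exists_walk_spineVert (L := L) (mem_catVerts.1 a.2).1 (mem_catVerts.1 b.2).1 hab
  exact ((reachable_foot a).trans p.reachable).trans (reachable_foot b).symm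

lemma dist_eq_dist_foot_add_one {a b : catVerts d L} (h : a.1.1 ≠ 0) (hab : a ≠ b) :
    (caterpillar d L).dist a b = (caterpillar d L).dist (foot a) b + 1 :=
  SimpleGraph.dist_eq_dist_add_one_of_forall_adj_eq (adj_foot h) (fun _ => eq_foot_of_adj h)
    hab (reachable _ _)

def leafInd (a : catVerts d L) : ℕ := if a.1.1 = 0 then 0 else 1

lemma dist_foot_add_leafInd {a b : catVerts d L} (hab : a ≠ b) :
    (caterpillar d L).dist a b = (caterpillar d L).dist (foot a) b + leafInd a := by
  by_cases h : a.1.1 = 0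
  · simp [leafInd, h, foot_eq_self h]
  · simp [leafInd, h, dist_eq_dist_foot_add_one h hab]

lemma dist_eq {a b : catVerts d L} (hab : a ≠ b) :
    (caterpillar d L).dist a b = (a.1.2 - b.1.2).natAbs + leafInd a + leafInd b := by
  rw [dist_foot_add_leafInd hab]
  by_cases hb : foot a = b
  · subst hb
    simp [foot, spineVert, leafInd]
  · rw [SimpleGraph.dist_comm, dist_foot_add_leafInd (Ne.symm hb), foot, foot, dist_spineVert]
    omega

lemma sum_catVerts (g : ℤ × ℤ → ℕ) :
    ∑ u : catVerts d L, g u.1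
      = ∑ i ∈ Icc (-d) d, ∑ j ∈ Icc (0 : ℤ) (L i), g (j, i) := by
  rw [sum_coe_sort (catVerts d L) g, catVerts, sum_biUnion]
  · refine sum_congr rfl fun i _ => sum_image fun _ _ _ _ h => congrArg Prod.fst h
  · intro i _ i' _ hii'
    simp only [Function.onFun, disjoint_left, mem_image]
    rintro _ ⟨j, -, rfl⟩ ⟨j', -, h⟩
    exact hii' (congrArg Prod.snd h).symm

lemma sum_coord (f : ℤ → ℕ) :
    ∑ u : catVerts d L, f u.1.2 = ∑ i ∈ Icc (-d) d, (L i + 1) * f i := by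
  refine (sum_catVerts (fun p => f p.2)).trans (sum_congr rfl fun i _ => ?_)
  simp only [sum_const, Int.card_Icc, smul_eq_mul]
  congr

lemma sum_leafInd : ∑ u : catVerts d L, leafInd u = ∑ i ∈ Icc (-d) d, L i := by
  refine (sum_catVerts (fun p => if p.1 = 0 then 0 else 1)).trans (sum_congr rfl fun i _ => ?_)
  rw [Icc_eq_cons_Ioc (by simp), sum_cons, if_pos rfl, zero_add,
    sum_congr rfl fun j hj => if_neg (mem_Ioc.1 hj).1.ne', sum_const, Int.card_Ioc]
  simp

lemma card_catVerts : Fintype.card (catVerts d L) = ∑ i ∈ Icc (-d) d, (L i + 1) := by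
  simpa using sum_coord (L := L) (d := d) (fun _ => 1)

lemma sum_sum_dist_add :
    (∑ u, ∑ v, (caterpillar d L).dist u v) + 2 * ∑ i ∈ Icc (-d) d, L i
      = ∑ i ∈ Icc (-d) d, ∑ j ∈ Icc (-d) d, (L i + 1) * (L j + 1) * (i - j).natAbs
        + 2 * (∑ i ∈ Icc (-d) d, (L i + 1)) * ∑ i ∈ Icc (-d) d, L i := by
  classical
  have hdiag : ∀ u v : catVerts d L,
      (caterpillar d L).dist u v + (if u = v then 2 * leafInd u else 0)
      = (u.1.2 - v.1.2).natAbs + leafInd u + leafInd v := by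
    intro u v
    by_cases h : u = v
    · subst h
      simp only [SimpleGraph.dist_self, ↓reduceIte, zero_add, sub_self, Int.natAbs_zero]
      ring
    · rw [if_neg h, add_zero, dist_eq h]
  have hcoord : ∑ u : catVerts d L, ∑ v : catVerts d L, (u.1.2 - v.1.2).natAbs
      = ∑ i ∈ Icc (-d) d, ∑ j ∈ Icc (-d) d, (L i + 1) * (L j + 1) * (i - j).natAbs := by
    calc _ = ∑ u : catVerts d L, ∑ j ∈ Icc (-d) d, (L j + 1) * (u.1.2 - j).natAbs :=
          sum_congr rfl fun u _ => sum_coord fun j => (u.1.2 - j).natAbs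
      _ = ∑ i ∈ Icc (-d) d, (L i + 1) * ∑ j ∈ Icc (-d) d, (L j + 1) * (i - j).natAbs :=
          sum_coord fun i => ∑ j ∈ Icc (-d) d, (L j + 1) * (i - j).natAbs
      _ = _ := by simp only [mul_sum, mul_assoc]
  have hsum := congrArg (fun F => ∑ u, ∑ v, F u v) (funext₂ hdiag)
  simp only [sum_add_distrib, sum_ite_eq, mem_univ, if_true, sum_const, card_univ, smul_eq_mul,
    ← mul_sum, sum_leafInd, hcoord] at hsum
  rw [hsum, card_catVerts]
  ring

def addLeaf (L : ℤ → ℕ) (t : ℤ) : ℤ → ℕ := fun i => L i + if i = t then 1 else 0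

variable {s t : ℤ}

lemma sum_addLeaf (ht : t ∈ Icc (-d) d) :
    ∑ i ∈ Icc (-d) d, addLeaf L t i = ∑ i ∈ Icc (-d) d, L i + 1 := by
  simp [addLeaf, sum_add_distrib, ht]

lemma sum_addLeaf_add_one_mul (ht : t ∈ Icc (-d) d) (f : ℤ → ℕ) :
    ∑ i ∈ Icc (-d) d, (addLeaf L t i + 1) * f i
      = ∑ i ∈ Icc (-d) d, (L i + 1) * f i + f t := by
  simp [addLeaf, add_right_comm _ (ite _ _ _), add_mul, sum_add_distrib, ht]

lemma sum_sum_addLeaf (ht : t ∈ Icc (-d) d) :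
    ∑ i ∈ Icc (-d) d, ∑ j ∈ Icc (-d) d,
        (addLeaf L t i + 1) * (addLeaf L t j + 1) * (i - j).natAbs
      = ∑ i ∈ Icc (-d) d, ∑ j ∈ Icc (-d) d, (L i + 1) * (L j + 1) * (i - j).natAbs
        + 2 * ∑ i ∈ Icc (-d) d, (L i + 1) * (i - t).natAbs := by
  have e : ∀ i, addLeaf L t i + 1 = (L i + 1) + if i = t then 1 else 0 := fun i => by
    unfold addLeaf; split_ifs <;> omega
  simp only [e]
  exact sum_sum_add_ite_mul_natAbs_sub ht (fun i => L i + 1)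

theorem sum_sum_dist_addLeaf (ht : t ∈ Icc (-d) d) :
    ∑ u, ∑ v, (caterpillar d (addLeaf L t)).dist u v
      = ∑ u, ∑ v, (caterpillar d L).dist u v
        + 2 * (∑ i ∈ Icc (-d) d, (L i + 1) * (i - t).natAbs + ∑ i ∈ Icc (-d) d, (L i + 1)
          + ∑ i ∈ Icc (-d) d, L i) := by
  have h := sum_sum_dist_add (d := d) (L := addLeaf L t)
  have h₀ := sum_sum_dist_add (d := d) (L := L)
  rw [sum_sum_addLeaf ht] at h
  simp only [sum_add_distrib, sum_addLeaf ht] at h h₀ ⊢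
  linarith

theorem wiener_addLeaf (ht : t ∈ Icc (-d) d) :
    wiener (caterpillar d (addLeaf L t)) = wiener (caterpillar d L)
      + (∑ i ∈ Icc (-d) d, (L i + 1) * (i - t).natAbs + ∑ i ∈ Icc (-d) d, (L i + 1)
          + ∑ i ∈ Icc (-d) d, L i) := by
  -- the truncating halving in `wiener` is harmless: the ordered sum grows by an even amount
  rw [wiener, wiener, sum_sum_dist_addLeaf ht, Nat.add_mul_div_left _ _ two_pos]

theorem wiener_addLeaf_addLeaf (hs : s ∈ Icc (-d) d) (ht : t ∈ Icc (-d) d) :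
    wiener (caterpillar d (addLeaf (addLeaf L s) t)) = wiener (caterpillar d L)
      + (∑ i ∈ Icc (-d) d, (L i + 1) * (i - s).natAbs
          + ∑ i ∈ Icc (-d) d, (L i + 1) * (i - t).natAbs + (s - t).natAbs
          + 2 * ∑ i ∈ Icc (-d) d, (L i + 1) + 2 * ∑ i ∈ Icc (-d) d, L i + 2) := by
  have hcard : ∑ i ∈ Icc (-d) d, (addLeaf L s i + 1) = ∑ i ∈ Icc (-d) d, (L i + 1) + 1 := by
    simp only [sum_add_distrib, sum_addLeaf hs]
    ring
  rw [wiener_addLeaf ht, wiener_addLeaf hs, sum_addLeaf_add_one_mul hs, sum_addLeaf hs, hcard]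
  ring

end Caterpillar

section B1

variable {n d x K : ℤ}

lemma sum_B1L_add_one_mul (hK : (n - 2 * d - 4) / 2 = K) (hx : 1 ≤ x) (hxd : x ≤ d)
    (hKd : K ≤ d) (f : ℤ → ℤ) :
    ∑ i ∈ Icc (-d) d, ((B1L n d x i : ℤ) + 1) * f i
      = ∑ i ∈ Icc (-d) d, f i + ∑ i ∈ Icc (-K) K, f i + f (-d - 1 + x) + f (d + 1 - x) := by
  have e : ∀ i, ((B1L n d x i : ℤ) + 1) * f i = f i + (if i ∈ Icc (-K) K then f i else 0)
      + ((if i = -d - 1 + x then f i else 0) + if i = d + 1 - x then f i else 0) := fun i => by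
    simp only [B1L, hK, mem_Icc, abs_le]
    split_ifs <;> push_cast <;> omega
  rw [sum_congr rfl fun i _ => e i, sum_add_distrib, sum_add_distrib, sum_add_distrib, sum_ite_mem,
    inter_eq_right.2 (Icc_subset_Icc (by omega) hKd), sum_ite_eq', sum_ite_eq',
    if_pos (by simp; omega), if_pos (by simp; omega)]
  ring

lemma sum_B1L (hK : (n - 2 * d - 4) / 2 = K) (hx : 1 ≤ x) (hxd : x ≤ d) (hK0 : 0 ≤ K)
    (hKd : K ≤ d) : ∑ i ∈ Icc (-d) d, (B1L n d x i : ℤ) = 2 * K + 3 := by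
  have h := sum_B1L_add_one_mul hK hx hxd hKd (fun _ => 1)
  simp only [mul_one, sum_add_distrib, sum_const, Int.card_Icc, nsmul_eq_mul] at h
  rw [Int.toNat_of_nonneg (by omega), Int.toNat_of_nonneg (by omega)] at h
  linarith

lemma sum_B1L_add_one_mul_abs_sub (hK : (n - 2 * d - 4) / 2 = K) (hx : 1 ≤ x) (hKd : K ≤ d)
    {s : ℤ} (hsK : |s| ≤ K) (hxs : x + |s| ≤ d) :
    ∑ i ∈ Icc (-d) d, ((B1L n d x i : ℤ) + 1) * |i - s|
      = d ^ 2 + d + K ^ 2 + K + 2 * s ^ 2 + 2 * d + 2 - 2 * x := by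
  have := le_abs_self s
  have := neg_abs_le s
  rw [sum_B1L_add_one_mul hK hx (by omega) hKd, Int.sum_Icc_neg_abs_sub_of_abs_le (by omega),
    Int.sum_Icc_neg_abs_sub_of_abs_le hsK, abs_of_neg (a := -d - 1 + x - s) (by omega),
    abs_of_pos (a := d + 1 - x - s) (by omega)]
  ring

lemma sum_B1L_add_one_mul_abs_sub_last (hK : (n - 2 * d - 4) / 2 = K) (hx : 1 ≤ x) (hxd : x ≤ d)
    (hK0 : 0 ≤ K) (hKd : K ≤ d) :
    ∑ i ∈ Icc (-d) d, ((B1L n d x i : ℤ) + 1) * |i - d| = 2 * d ^ 2 + 2 * K * d + 4 * d := by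
  rw [sum_B1L_add_one_mul hK hx hxd hKd, Int.sum_Icc_neg_abs_sub_of_le (by omega) le_rfl,
    Int.sum_Icc_neg_abs_sub_of_le hK0 hKd, abs_of_neg (a := -d - 1 + x - d) (by omega),
    abs_of_nonpos (a := d + 1 - x - d) (by omega)]
  ring

end B1

theorem wiener_G1_general (n d x s : ℤ) (hne : Even n)
    (hd1 : n - 4 ≤ 4 * d) (hd2 : 2 * d ≤ n - 10)
    (hx1 : 1 ≤ x) (hx2 : 2 * x ≤ 4 + 4 * d - (n - 2))
    (hs : s ∈ ({-1, 0, 1, 2} : Set ℤ)) :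
    (wiener (G1 n d x s) : ℚ)
      = (wiener (B1 (n - 2) d x) : ℚ) + (n : ℚ)^2 / 4 + 3 * (n : ℚ) / 2
        + 2 * (d:ℚ)^2 + 3 * (d:ℚ) + 2 * (s:ℚ)^2 - (s:ℚ) - 2 * (x:ℚ) := by
  obtain ⟨m, rfl⟩ := hne
  have hs' : |s| ≤ 2 := by rcases hs with h | h | h | h <;> simp_all
  have := abs_le.1 hs'
  have hK : (m + m - 2 - 2 * d - 4) / 2 = m - d - 3 := by omega
  have hsI : s ∈ Icc (-d) d := by simp only [mem_Icc]; omega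
  have hdI : d ∈ Icc (-d) d := by simp only [mem_Icc]; omega
  obtain ⟨c, hW, hc⟩ : ∃ c : ℕ, wiener (G1 (m + m) d x s) = wiener (B1 (m + m - 2) d x) + c
      ∧ (c : ℤ) = m ^ 2 + 3 * m + 2 * d ^ 2 + 3 * d + 2 * s ^ 2 - s - 2 * x := by
    -- `G1 (m + m) d x s` unfolds to `caterpillar d (addLeaf (addLeaf (B1L (m + m - 2) d x) s) d)`
    refine ⟨_, Caterpillar.wiener_addLeaf_addLeaf hsI hdI, ?_⟩
    push_cast
    rw [sum_add_distrib, sum_B1L hK hx1 (by omega) (by omega) (by omega),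
      sum_B1L_add_one_mul_abs_sub hK hx1 (by omega) (by omega) (by omega),
      sum_B1L_add_one_mul_abs_sub_last hK hx1 (by omega) (by omega) (by omega),
      abs_of_nonpos (a := s - d) (by omega)]
    simp only [sum_const, Int.card_Icc, nsmul_eq_mul, mul_one]
    rw [Int.toNat_of_nonneg (by omega)]
    ring
  have hcq : (c : ℚ) = m ^ 2 + 3 * m + 2 * d ^ 2 + 3 * d + 2 * s ^ 2 - s - 2 * x := by
    exact_mod_cast hc
  rw [hW]
  push_cast
  rw [hcq]
  ring

/-- `W(G₁(n,d,x,s)) = W(B₁(n−2,d,x)) + n²/4 + 3n/2 + 2d² + 3d + 2s² − s − 2x`. -/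
theorem wiener_G1 (n d x s : ℤ) (hne : Even n) (hn : 20 ≤ n)
    (hd1 : n - 4 ≤ 4 * d) (hd2 : 2 * d ≤ n - 10)
    (hx1 : 1 ≤ x) (hx2 : 2 * x ≤ 4 + 4 * d - (n - 2))
    (hs : s ∈ ({-1, 0, 1, 2} : Set ℤ)) :
    (wiener (G1 n d x s) : ℚ)
      = (wiener (B1 (n - 2) d x) : ℚ) + (n : ℚ)^2 / 4 + 3 * (n : ℚ) / 2
        + 2 * (d:ℚ)^2 + 3 * (d:ℚ) + 2 * (s:ℚ)^2 - (s:ℚ) - 2 * (x:ℚ) :=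
  wiener_G1_general n d x s hne hd1 hd2 hx1 hx2 hs
end

section
/- For integers n, d, x, s for which G₂(n,d,x,s) is defined, W(G₂(n,d,x,s)) = W(B₂(n−2,d,x)) + (2d+4)n − 2d² − 7d − 6 − 2x + 2s² − s. -/
/-!
A caterpillar is a tree, and the distance between distinct vertices sitting at spine positions
`i` and `j` is `|i - j|`, plus one for each of the two that is a leaf. Attaching a new leaf at
`u_t` therefore raises the Wiener index by its transmission
`∑ᵢ (Lᵢ (|t - i| + 2) + |t - i| + 1)`, and `G₂(n,d,x,s)` arises from `B₂(n-2,d,x)` by attaching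
a leaf at `u_s` and then one at `u_d`; the second transmission exceeds that of `u_d` in `B₂` by
`d - s + 2`. For `B₂` both transmissions are explicit quadratics, by the closed forms of
`∑_{|i| ≤ k} |t - i|`, and with `r = n/2 - 2d - x` leaves at `u_{±d}` they add up to the formula.
-/

open SimpleGraph Finset

theorem Finset.sum_sum_insert_of_symm {α M : Type*} [DecidableEq α] [AddCommMonoid M]
    {s : Finset α} {a : α} (ha : a ∉ s) (f : α → α → M) (hf : ∀ p q, f p q = f q p)
    (hfa : f a a = 0) :
    ∑ p ∈ insert a s, ∑ q ∈ insert a s, f p q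
      = ∑ p ∈ s, ∑ q ∈ s, f p q + 2 • ∑ q ∈ s, f a q := by
  simp_rw [sum_insert ha, hfa, zero_add, sum_add_distrib, hf _ a]
  abel

theorem sum_Icc_neg_add_one {M : Type*} [AddCommMonoid M] (f : ℤ → M) {k : ℤ} (hk : 0 ≤ k) :
    ∑ i ∈ Icc (-(k + 1)) (k + 1), f i = ∑ i ∈ Icc (-k) k, f i + (f (-(k + 1)) + f (k + 1)) := by
  have hIcc : Icc (-(k + 1)) (k + 1) = insert (-(k + 1)) (insert (k + 1) (Icc (-k) k)) := by
    ext i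
    simp only [mem_insert, mem_Icc]
    omega
  rw [hIcc, sum_insert (by simp; omega), sum_insert (by simp)]
  abel

theorem sum_abs_sub_Icc_of_le_abs {t k : ℤ} (hk : 0 ≤ k) (hkt : k ≤ |t|) :
    ∑ i ∈ Icc (-k) k, |t - i| = (2 * k + 1) * |t| := by
  induction k, hk using Int.leInduction with
  | base => simp
  | succ k hk ih =>
    rw [sum_Icc_neg_add_one _ hk, ih (by omega)]
    grind

theorem sum_abs_sub_Icc_of_abs_le {t k : ℤ} (htk : |t| ≤ k) :
    ∑ i ∈ Icc (-k) k, |t - i| = t ^ 2 + k ^ 2 + k := by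
  induction k, htk using Int.leInduction with
  | base => rw [sum_abs_sub_Icc_of_le_abs (abs_nonneg t) le_rfl, ← sq_abs t]; ring
  | succ k hk ih =>
    rw [sum_Icc_neg_add_one _ ((abs_nonneg t).trans hk), ih]
    grind

theorem sum_Icc_mul_abs_sub_add (t a b : ℤ) {k : ℤ} (hk : 0 ≤ k) :
    ∑ i ∈ Icc (-k) k, (a * |t - i| + b) = a * ∑ i ∈ Icc (-k) k, |t - i| + (2 * k + 1) * b := by
  rw [sum_add_distrib, ← mul_sum, sum_const, nsmul_eq_mul, Int.card_Icc_of_le (-k) k (by omega)]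
  ring

namespace SimpleGraph

variable {V : Type*} {G : SimpleGraph V}

theorem Walk.abs_sub_le_length (φ : V → ℤ) (hφ : ∀ a b, G.Adj a b → |φ a - φ b| ≤ 1)
    {a b : V} (p : G.Walk a b) : |φ a - φ b| ≤ p.length := by
  induction p with
  | nil => simp
  | @cons u v w huv p ih =>
    rw [Walk.length_cons, Nat.cast_succ]
    calc |φ u - φ w| ≤ |φ u - φ v| + |φ v - φ w| := abs_sub_le _ _ _
      _ ≤ p.length + 1 := by linarith [hφ u v huv]

theorem Reachable.abs_sub_le_dist (φ : V → ℤ) (hφ : ∀ a b, G.Adj a b → |φ a - φ b| ≤ 1)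
    {a b : V} (h : G.Reachable a b) : |φ a - φ b| ≤ G.dist a b := by
  obtain ⟨p, hp⟩ := h.exists_walk_length_eq_dist
  exact hp ▸ p.abs_sub_le_length φ hφ

theorem dist_eq_dist_add_one_of_adj_iff {a w b : V} (ha : ∀ c, G.Adj a c ↔ c = w)
    (hwb : G.Reachable w b) (hab : a ≠ b) : G.dist a b = G.dist w b + 1 := by
  have haw : G.Adj a w := (ha w).mpr rfl
  refine le_antisymm ?_ ?_
  · have := hwb.dist_triangle_right a
    rw [dist_eq_one_iff_adj.mpr haw] at this
    omega
  · obtain ⟨p, hp⟩ := (haw.reachable.trans hwb).exists_walk_length_eq_dist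
    cases p with
    | nil => exact absurd rfl hab
    | cons hav q =>
      obtain rfl := (ha _).mp hav
      rw [← hp, Walk.length_cons]
      exact Nat.succ_le_succ (dist_le q)

end SimpleGraph

section Caterpillar

variable {d : ℤ} {L : ℤ → ℕ}

theorem mem_catVerts {p : ℤ × ℤ} :
    p ∈ catVerts d L ↔ -d ≤ p.2 ∧ p.2 ≤ d ∧ 0 ≤ p.1 ∧ p.1 ≤ L p.2 := by
  obtain ⟨j, i⟩ := p
  simp only [catVerts, mem_biUnion, mem_image, mem_Icc, Prod.mk.injEq]
  constructor
  · rintro ⟨i, hi, j, hj, rfl, rfl⟩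
    exact ⟨hi.1, hi.2, hj⟩
  · rintro ⟨h₁, h₂, hj⟩
    exact ⟨i, ⟨h₁, h₂⟩, j, hj, rfl, rfl⟩

def spineVertex (a : catVerts d L) : catVerts d L :=
  ⟨(0, a.1.2), by have := mem_catVerts.mp a.2; exact mem_catVerts.mpr (by omega)⟩

theorem caterpillar_adj_of_add_one {a b : catVerts d L} (ha : a.1.1 = 0) (hb : b.1.1 = 0)
    (hab : a.1.2 + 1 = b.1.2) : (caterpillar d L).Adj a b := by
  refine (fromRel_adj _ _ _).mpr ⟨fun h => ?_, .inl (.inl ⟨ha, hb, hab⟩)⟩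
  rw [h] at hab
  omega

theorem abs_sub_le_one_of_caterpillar_adj {a b : catVerts d L} (h : (caterpillar d L).Adj a b) :
    |a.1.2 - b.1.2| ≤ 1 := by
  obtain ⟨-, h | h⟩ := (fromRel_adj _ _ _).mp h <;>
    rcases h with ⟨-, -, h⟩ | ⟨h, -, -⟩ <;> rw [abs_le] <;> omega

theorem caterpillar_adj_iff_eq_spineVertex {a : catVerts d L} (ha : a.1.1 ≠ 0)
    (c : catVerts d L) : (caterpillar d L).Adj a c ↔ c = spineVertex a := by
  rw [caterpillar, fromRel_adj, Subtype.ext_iff]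
  constructor
  · rintro ⟨-, (⟨h, -⟩ | ⟨-, h, -⟩) | (⟨-, h, -⟩ | ⟨h₁, h₂, -⟩)⟩
    iterate 3 exact absurd h ha
    exact Prod.ext h₂ h₁
  · intro h
    refine ⟨fun h' => ha (by rw [h', h]; rfl), .inr (.inr ⟨by rw [h]; rfl, by rw [h]; rfl, ha⟩)⟩

theorem exists_caterpillar_spine_walk (k : ℕ) {a b : catVerts d L} (ha : a.1.1 = 0)
    (hb : b.1.1 = 0) (hab : b.1.2 = a.1.2 + k) :
    ∃ p : (caterpillar d L).Walk a b, p.length = k := by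
  induction k generalizing a with
  | zero =>
    obtain rfl : a = b := Subtype.ext (Prod.ext (by omega) (by omega))
    exact ⟨.nil, rfl⟩
  | succ k ih =>
    have := mem_catVerts.mp a.2
    have := mem_catVerts.mp b.2
    let c : catVerts d L := ⟨(0, a.1.2 + 1), mem_catVerts.mpr (by simp; omega)⟩
    obtain ⟨p, hp⟩ := ih (a := c) rfl (by simp [c]; omega)
    exact ⟨.cons (caterpillar_adj_of_add_one ha rfl rfl) p, by simp [hp]⟩

theorem caterpillar_spine_reachable_and_dist_le {a b : catVerts d L} (ha : a.1.1 = 0)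
    (hb : b.1.1 = 0) :
    (caterpillar d L).Reachable a b ∧ (caterpillar d L).dist a b ≤ (a.1.2 - b.1.2).natAbs := by
  rcases le_total a.1.2 b.1.2 with h | h
  · obtain ⟨p, hp⟩ := exists_caterpillar_spine_walk (b.1.2 - a.1.2).toNat ha hb (by omega)
    exact ⟨p.reachable, (dist_le p).trans (by omega)⟩
  · obtain ⟨p, hp⟩ := exists_caterpillar_spine_walk (a.1.2 - b.1.2).toNat hb ha (by omega)
    exact ⟨p.reachable.symm, dist_comm.trans_le ((dist_le p).trans (by omega))⟩

theorem caterpillar_preconnected : (caterpillar d L).Preconnected := by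
  have toSpine : ∀ a : catVerts d L, (caterpillar d L).Reachable a (spineVertex a) := by
    intro a
    by_cases ha : a.1.1 = 0
    · rw [show spineVertex a = a from Subtype.ext (Prod.ext ha.symm rfl)]
    · exact ((caterpillar_adj_iff_eq_spineVertex ha _).mpr rfl).reachable
  intro a b
  exact ((toSpine a).trans (caterpillar_spine_reachable_and_dist_le rfl rfl).1).trans
    (toSpine b).symm

theorem caterpillar_dist_of_spine {a b : catVerts d L} (ha : a.1.1 = 0) (hb : b.1.1 = 0) :
    (caterpillar d L).dist a b = (a.1.2 - b.1.2).natAbs := by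
  have hle := (caterpillar_spine_reachable_and_dist_le ha hb).2
  have hge := (caterpillar_preconnected a b).abs_sub_le_dist (fun v => v.1.2)
    (fun _ _ => abs_sub_le_one_of_caterpillar_adj)
  rw [Int.abs_eq_natAbs] at hge
  omega

theorem caterpillar_dist_eq_spineVertex_add_one {a b : catVerts d L} (ha : a.1.1 ≠ 0)
    (hab : a ≠ b) : (caterpillar d L).dist a b = (caterpillar d L).dist (spineVertex a) b + 1 :=
  dist_eq_dist_add_one_of_adj_iff (caterpillar_adj_iff_eq_spineVertex ha)
    (caterpillar_preconnected _ _) hab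

theorem caterpillar_dist_of_spine_left {a : catVerts d L} (ha : a.1.1 = 0) (b : catVerts d L) :
    (caterpillar d L).dist a b = (a.1.2 - b.1.2).natAbs + if b.1.1 = 0 then 0 else 1 := by
  by_cases hb : b.1.1 = 0
  · simp [caterpillar_dist_of_spine ha hb, hb]
  · have hba : b ≠ a := fun h => hb (h ▸ ha)
    rw [dist_comm, caterpillar_dist_eq_spineVertex_add_one hb hba, dist_comm,
      caterpillar_dist_of_spine ha rfl, if_neg hb]
    rfl

def catDist (p q : ℤ × ℤ) : ℕ :=
  if p = q then 0
  else (p.2 - q.2).natAbs + (if p.1 = 0 then 0 else 1) + (if q.1 = 0 then 0 else 1)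

theorem catDist_comm (p q : ℤ × ℤ) : catDist p q = catDist q p := by
  unfold catDist
  split_ifs <;> first | rfl | omega | simp_all

theorem caterpillar_dist (a b : catVerts d L) : (caterpillar d L).dist a b = catDist a b := by
  by_cases hab : a = b
  · simp [hab, catDist]
  have hab' : a.1 ≠ b.1 := fun h => hab (Subtype.ext h)
  by_cases ha : a.1.1 = 0
  · rw [caterpillar_dist_of_spine_left ha, catDist, if_neg hab', if_pos ha, add_zero]
  · rw [caterpillar_dist_eq_spineVertex_add_one ha hab, caterpillar_dist_of_spine_left rfl,
      catDist, if_neg hab', if_neg ha]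
    exact add_right_comm _ _ _

theorem wiener_caterpillar :
    wiener (caterpillar d L) = (∑ p ∈ catVerts d L, ∑ q ∈ catVerts d L, catDist p q) / 2 := by
  simp_rw [wiener, caterpillar_dist]
  rw [← sum_coe_sort (catVerts d L)]
  simp_rw [← sum_coe_sort (catVerts d L) (catDist _)]

theorem sum_catVerts {M : Type*} [AddCommMonoid M] (f : ℤ × ℤ → M) :
    ∑ p ∈ catVerts d L, f p = ∑ i ∈ Icc (-d) d, ∑ j ∈ Icc 0 (L i : ℤ), f (j, i) := by
  rw [catVerts, sum_biUnion]
  · exact sum_congr rfl fun i _ => sum_image fun _ _ _ _ h => (Prod.mk.inj h).1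
  · intro i _ i' _ hii'
    simp only [Function.onFun, Finset.disjoint_left, mem_image]
    rintro _ ⟨j, -, rfl⟩ ⟨j', -, h⟩
    exact hii' (Prod.mk.inj h).2.symm

theorem catVerts_add_leaf {t : ℤ} (ht : -d ≤ t ∧ t ≤ d) :
    catVerts d (fun i => L i + if i = t then 1 else 0)
      = insert ((L t : ℤ) + 1, t) (catVerts d L) := by
  ext ⟨j, i⟩
  simp only [mem_insert, mem_catVerts, Prod.mk.injEq]
  split_ifs with h
  · subst h
    push_cast
    omega
  · simp only [add_zero]
    omega

theorem new_leaf_notMem_catVerts (t : ℤ) : ((L t : ℤ) + 1, t) ∉ catVerts d L := by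
  rw [mem_catVerts]
  dsimp only
  omega

/-- The sum of the distances from a new leaf at `u_t` to all vertices of `caterpillar d L`: the
`L i` leaves at `u_i` lie at distance `|t - i| + 2` from it and `u_i` itself at `|t - i| + 1`. -/
noncomputable def leafTransmission (d : ℤ) (L : ℤ → ℕ) (t : ℤ) : ℤ :=
  ∑ i ∈ Icc (-d) d, ((L i : ℤ) * (|t - i| + 2) + (|t - i| + 1))

theorem sum_catDist_new_leaf (t : ℤ) :
    ((∑ q ∈ catVerts d L, catDist ((L t : ℤ) + 1, t) q : ℕ) : ℤ) = leafTransmission d L t := by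
  rw [Nat.cast_sum, sum_catVerts, leafTransmission]
  refine sum_congr rfl fun i _ => ?_
  have hdist : ∀ j ∈ Icc 0 (L i : ℤ),
      (catDist ((L t : ℤ) + 1, t) (j, i) : ℤ) = |t - i| + 1 + if j = 0 then 0 else 1 := by
    intro j hj
    rw [mem_Icc] at hj
    have hne : ((L t : ℤ) + 1, t) ≠ (j, i) := by
      rintro ⟨⟩
      omega
    rw [catDist, if_neg hne, if_neg (by positivity)]
    push_cast [Int.natCast_natAbs]
    split_ifs <;> ring
  rw [sum_congr rfl hdist, ← insert_Icc_add_one_left_eq_Icc (by positivity), sum_insert (by simp),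
    sum_congr rfl fun j hj => by rw [if_neg (by rw [mem_Icc] at hj; omega)], sum_const,
    Int.card_Icc, zero_add, add_sub_cancel_right, Int.toNat_natCast, nsmul_eq_mul, if_pos rfl]
  ring

theorem wiener_caterpillar_add_leaf {t : ℤ} (ht : -d ≤ t ∧ t ≤ d) :
    (wiener (caterpillar d (fun i => L i + if i = t then 1 else 0)) : ℤ)
      = wiener (caterpillar d L) + leafTransmission d L t := by
  rw [wiener_caterpillar, wiener_caterpillar, catVerts_add_leaf ht,
    sum_sum_insert_of_symm (new_leaf_notMem_catVerts t) _ catDist_comm (by simp [catDist]),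
    smul_eq_mul, Nat.add_mul_div_left _ _ two_pos, Nat.cast_add, sum_catDist_new_leaf]

theorem leafTransmission_add_leaf {s : ℤ} (hs : -d ≤ s ∧ s ≤ d) (t : ℤ) :
    leafTransmission d (fun i => L i + if i = s then 1 else 0) t
      = leafTransmission d L t + (|t - s| + 2) := by
  simp only [leafTransmission, Nat.cast_add, Nat.cast_ite, Nat.cast_one, Nat.cast_zero, add_mul,
    ite_mul, one_mul, zero_mul, sum_add_distrib, sum_ite_eq', mem_Icc, if_pos hs]
  ring

end Caterpillar

section B2

variable {N d x : ℤ}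

theorem sum_Icc_B2L {M : Type*} [AddCommMonoid M] (f : ℤ → ℕ → M) (hd : 2 ≤ d) :
    ∑ i ∈ Icc (-d) d, f i (B2L N d x i)
      = ∑ i ∈ Icc (-(d - 2)) (d - 2), f i 1 + (f (-(d - 1)) x.toNat + f (d - 1) x.toNat)
        + (f (-d) ((N - 4 * d - 2 * x + 2) / 2).toNat
          + f d ((N - 4 * d - 2 * x + 2) / 2).toNat) := by
  have hout : ∑ i ∈ Icc (-d) d, f i (B2L N d x i) = ∑ i ∈ Icc (-(d - 1)) (d - 1), f i (B2L N d x i)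
      + (f (-d) (B2L N d x (-d)) + f d (B2L N d x d)) := by
    simpa using sum_Icc_neg_add_one (fun i => f i (B2L N d x i)) (k := d - 1) (by omega)
  have hmid : ∑ i ∈ Icc (-(d - 1)) (d - 1), f i (B2L N d x i)
      = ∑ i ∈ Icc (-(d - 2)) (d - 2), f i (B2L N d x i)
        + (f (-(d - 1)) (B2L N d x (-(d - 1))) + f (d - 1) (B2L N d x (d - 1))) := by
    have := sum_Icc_neg_add_one (fun i => f i (B2L N d x i)) (k := d - 2) (by omega)
    rwa [show d - 2 + 1 = d - 1 by ring] at this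
  have hin : ∀ i ∈ Icc (-(d - 2)) (d - 2), f i (B2L N d x i) = f i 1 := by
    intro i hi
    have hi : |i| ≤ d - 2 := abs_le.mpr (mem_Icc.mp hi)
    rw [B2L, if_pos hi, if_neg (by omega), if_neg (by omega)]
  rw [hout, hmid, sum_congr rfl hin]
  simp only [B2L, abs_neg, abs_of_nonneg (show 0 ≤ d - 1 by omega),
    abs_of_nonneg (show 0 ≤ d by omega)]
  simp (disch := omega) only [if_neg, if_true, zero_add, add_zero]

theorem leafTransmission_B2L_eq (hd : 2 ≤ d) (t : ℤ) :
    leafTransmission d (B2L N d x) t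
      = 2 * ∑ i ∈ Icc (-(d - 2)) (d - 2), |t - i| + 3 * (2 * d - 3)
        + x.toNat * (|t + (d - 1)| + |t - (d - 1)| + 4) + (|t + (d - 1)| + |t - (d - 1)| + 2)
        + ((N - 4 * d - 2 * x + 2) / 2).toNat * (|t + d| + |t - d| + 4)
        + (|t + d| + |t - d| + 2) := by
  rw [leafTransmission, sum_Icc_B2L (fun i (l : ℕ) => (l : ℤ) * (|t - i| + 2) + (|t - i| + 1)) hd,
    sum_congr rfl fun i _ => show ((1 : ℕ) : ℤ) * (|t - i| + 2) + (|t - i| + 1) = 2 * |t - i| + 3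
      by push_cast; ring, sum_Icc_mul_abs_sub_add t 2 3 (by omega)]
  simp only [sub_neg_eq_add]
  ring

theorem leafTransmission_B2L_of_abs_le {t : ℤ} (ht : |t| ≤ d - 2) :
    leafTransmission d (B2L N d x) t
      = 2 * t ^ 2 + 2 * d ^ 2 + 4 * d - 3 + (2 * d + 2) * x.toNat
        + (2 * d + 4) * ((N - 4 * d - 2 * x + 2) / 2).toNat := by
  have hd : 2 ≤ d := by linarith [abs_nonneg t]
  have h₁ : |t + (d - 1)| + |t - (d - 1)| = 2 * (d - 1) := by grind
  have h₂ : |t + d| + |t - d| = 2 * d := by grind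
  rw [leafTransmission_B2L_eq hd, sum_abs_sub_Icc_of_abs_le ht, h₁, h₂]
  ring

theorem leafTransmission_B2L_self (hd : 2 ≤ d) :
    leafTransmission d (B2L N d x) d
      = 4 * d ^ 2 + 4 * d - 5 + (2 * d + 4) * (x.toNat + ((N - 4 * d - 2 * x + 2) / 2).toNat) := by
  rw [leafTransmission_B2L_eq hd,
    sum_abs_sub_Icc_of_le_abs (by omega) (by linarith [le_abs_self d]), sub_self, abs_zero,
    sub_sub_cancel, abs_one]
  simp only [abs_of_nonneg (by omega : (0 : ℤ) ≤ d), abs_of_nonneg (by omega : (0 : ℤ) ≤ d + d),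
    abs_of_nonneg (by omega : (0 : ℤ) ≤ d + (d - 1))]
  ring

end B2

theorem wiener_G2_general (n d x s : ℤ) (hne : Even n)
    (hd1 : 4 ≤ d)
    (hx1 : 1 ≤ x) (hx2 : 2 * x ≤ (n - 2) - 4 * d + 2)
    (hs : s ∈ ({-1, 0, 1, 2} : Set ℤ)) :
    (wiener (G2 n d x s) : ℚ)
      = (wiener (B2 (n - 2) d x) : ℚ) + (2 * (d:ℚ) + 4) * (n : ℚ)
        - 2 * (d:ℚ)^2 - 7 * (d:ℚ) - 6 - 2 * (x:ℚ) + 2 * (s:ℚ)^2 - (s:ℚ) := by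
  have hs₀ : -1 ≤ s ∧ s ≤ 2 := by
    simp only [Set.mem_insert_iff, Set.mem_singleton_iff] at hs
    omega
  have hs_abs : |s| ≤ d - 2 := abs_le.mpr ⟨by omega, by omega⟩
  have hW : (wiener (G2 n d x s) : ℤ) = wiener (B2 (n - 2) d x)
      + leafTransmission d (B2L (n - 2) d x) s
      + (leafTransmission d (B2L (n - 2) d x) d + (d - s + 2)) := by
    rw [G2, B2, wiener_caterpillar_add_leaf (L := fun i => B2L (n - 2) d x i + _) (by omega),
      wiener_caterpillar_add_leaf (by omega), leafTransmission_add_leaf (by omega),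
      abs_of_nonneg (by omega)]
  obtain ⟨m, rfl⟩ := hne
  have hr : ((m + m - 2 - 4 * d - 2 * x + 2) / 2).toNat = (m - 2 * d - x : ℤ) := by omega
  rw [leafTransmission_B2L_of_abs_le hs_abs, leafTransmission_B2L_self (by omega), hr,
    Int.toNat_of_nonneg (by omega)] at hW
  exact_mod_cast (show (wiener (G2 (m + m) d x s) : ℤ) = wiener (B2 (m + m - 2) d x)
    + (2 * d + 4) * (m + m) - 2 * d ^ 2 - 7 * d - 6 - 2 * x + 2 * s ^ 2 - s by rw [hW]; ring)

/-- `W(G₂(n,d,x,s)) = W(B₂(n−2,d,x)) + (2d+4)n − 2d² − 7d − 6 − 2x + 2s² − s`. -/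
theorem wiener_G2 (n d x s : ℤ) (hne : Even n) (hn : 20 ≤ n)
    (hd1 : 4 ≤ d) (hd2 : 4 * d ≤ n - 2)
    (hx1 : 1 ≤ x) (hx2 : 2 * x ≤ (n - 2) - 4 * d + 2)
    (hs : s ∈ ({-1, 0, 1, 2} : Set ℤ)) :
    (wiener (G2 n d x s) : ℚ)
      = (wiener (B2 (n - 2) d x) : ℚ) + (2 * (d:ℚ) + 4) * (n : ℚ)
        - 2 * (d:ℚ)^2 - 7 * (d:ℚ) - 6 - 2 * (x:ℚ) + 2 * (s:ℚ)^2 - (s:ℚ) :=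
  wiener_G2_general n d x s hne hd1 hx1 hx2 hs
end
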